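/- With the notation of Section 4, for all u, v ∈ ℕ and k, n ≥ 1 the recurrence d_{(2k+3)_{a²}}(u,v,n) = d_{(2k+2)_{ab}}(u,v,n) + d_{(2k+1)_{ab}}(u−1, v, n−(2k+2)) + d_{(2k)_{ab}}(u−2, v, n−(2k+3)) holds; equivalently, in terms of generating functions, G_{(2k+3)_{a²}}(a,b,q) = G_{(2k+2)_{ab}}(a,b,q) + aq^{2k+2} G_{(2k+1)_{ab}}(a,b,q) + a²q^{2k+3} G_{(2k)_{ab}}(a,b,q). -/

import Mathlib

/-- The five colours a, b, ab, a², b². -/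
inductive Col where
  | a | b | ab | aa | bb
deriving DecidableEq, Inhabited

open Col

/-- Position of a coloured integer in the ordering
1_{ab} < 1_a < 1_{b²} < 1_b < 2_{ab} < 2_a < 3_{a²} < 2_b < 3_{ab} < ⋯ . -/
def colPos : ℕ × Col → ℕ
  | (k, Col.ab) => 4 * k - 4
  | (k, Col.a)  => 4 * k - 3
  | (k, Col.bb) => 4 * k - 2
  | (k, Col.b)  => 4 * k - 1
  | (k, Col.aa) => 4 * k - 6

/-- Entry of the matrix A: minimal gap below a part of size `k` and colour `x`,
above a part of colour `y`. -/
def colMinGap (k : ℕ) (x y : Col) : ℕ :=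
  match x, y with
  | Col.a, y => if k % 2 = 1 then
      (match y with | Col.ab => 1 | _ => 2)
    else
      (match y with | Col.aa => 3 | Col.bb => 3 | _ => 2)
  | Col.bb, y => (match y with | Col.b => 3 | Col.bb => 4 | _ => 2)
  | Col.b, y => if k % 2 = 1 then
      (match y with | Col.a => 1 | Col.ab => 1 | _ => 2)
    else
      (match y with | Col.a => 1 | Col.ab => 1 | Col.aa => 1 | Col.bb => 3 | _ => 2)
  | Col.ab, y => if k % 2 = 0 then
      (match y with | Col.aa => 3 | Col.bb => 3 | _ => 2)
    else
      (match y with | Col.b => 3 | Col.bb => 3 | _ => 2)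
  | Col.aa, y => (match y with | Col.aa => 4 | Col.bb => 4 | _ => 3)

/-- A coloured partition as in the non-dilated Siladić theorem: parts are coloured
positive integers, squared colours only occur on odd integers, there is no part
1_{ab} or 1_{b²}, and consecutive parts satisfy the gap conditions of matrix A. -/
def IsColPartition (l : List (ℕ × Col)) : Prop :=
  (∀ p ∈ l, 1 ≤ p.1 ∧ ((p.2 = Col.aa ∨ p.2 = Col.bb) → p.1 % 2 = 1) ∧
    p ≠ (1, Col.ab) ∧ p ≠ (1, Col.bb)) ∧
  ∀ i, i + 1 < l.length →
    l[i]!.1 ≥ l[i+1]!.1 + colMinGap l[i]!.1 l[i]!.2 l[i+1]!.2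

/-- Number of parts coloured a or ab, plus twice the number of parts coloured a². -/
def aCt (l : List (ℕ × Col)) : ℕ :=
  (l.countP fun p => p.2 == Col.a || p.2 == Col.ab) +
    2 * (l.countP fun p => p.2 == Col.aa)

/-- Number of parts coloured b or ab, plus twice the number of parts coloured b². -/
def bCt (l : List (ℕ × Col)) : ℕ :=
  (l.countP fun p => p.2 == Col.b || p.2 == Col.ab) +
    2 * (l.countP fun p => p.2 == Col.bb)

/-- D(u,v,n): coloured partitions of n with a-count u and b-count v. -/
noncomputable def Dct (u v n : ℕ) : ℕ :=
  Nat.card {l : List (ℕ × Col) // IsColPartition l ∧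
    (l.map Prod.fst).sum = n ∧ aCt l = u ∧ bCt l = v}

/-- d_K(u,v,n): as D(u,v,n) but with largest part at most K in the coloured order;
integer arguments (negative values give 0). -/
noncomputable def dct (K : ℕ × Col) (u v n : ℤ) : ℕ :=
  Nat.card {l : List (ℕ × Col) // IsColPartition l ∧
    (∀ p ∈ l, colPos p ≤ colPos K) ∧
    ((l.map Prod.fst).sum : ℤ) = n ∧ (aCt l : ℤ) = u ∧ (bCt l : ℤ) = v}

/-- e_K(u,v,n): as d_K(u,v,n) but with largest part exactly K. -/
noncomputable def ect (K : ℕ × Col) (u v n : ℤ) : ℕ :=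
  Nat.card {l : List (ℕ × Col) // IsColPartition l ∧
    (∀ p ∈ l, colPos p ≤ colPos K) ∧ l ≠ [] ∧ l.head! = K ∧
    ((l.map Prod.fst).sum : ℤ) = n ∧ (aCt l : ℤ) = u ∧ (bCt l : ℤ) = v}

/-- The generating function G_K(a,b,q) = 1 + ∑_{u,v≥0,n≥1} d_K(u,v,n) aᵘbᵛqⁿ,
as a formal power series in the variables a = X 0, b = X 1, q = X 2. -/
noncomputable def Gf (K : ℕ × Col) : MvPowerSeries (Fin 3) ℚ :=
  fun e => (dct K (e 0) (e 1) (e 2) : ℚ)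

/-!
Sort the partitions counted by `d_{(2k+3)_{a²}}` by their largest part: it is at most
`(2k+2)_{ab}`, or it is `(2k+2)_a` or `(2k+3)_{a²}`. In general, consecutive coloured integers have
consecutive `colPos`, so `d_K = d_{K'} + e_K` for the predecessor `K'` of `K`. Removing the largest
part `p` leaves exactly the partitions whose largest part satisfies the gap condition below `p`, so
`e_p` depends only on the row of `p` in the gap matrix and on the weight of `p`. The rows of
`(2k+2)_a` and `(2k+3)_{a²}`, of `(2k)_a` and `(2k+1)_{a²}`, and (on valid parts) of `(2k)_b` and
`(2k+1)_{ab}` coincide, and the parts allowed below `(2k+2)_a` are those up to `(2k)_a` together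
with `(2k)_b`. These identities add up to the recurrence. The generating-function form follows
coefficientwise because `d_K(u, v, n)` vanishes for `u < 0` or `n < 0`.
-/

namespace ColPartition

def ValidPart (p : ℕ × Col) : Prop :=
  1 ≤ p.1 ∧ ((p.2 = Col.aa ∨ p.2 = Col.bb) → p.1 % 2 = 1) ∧ p ≠ (1, Col.ab) ∧ p ≠ (1, Col.bb)

def Gap (p q : ℕ × Col) : Prop := q.1 + colMinGap p.1 p.2 q.2 ≤ p.1

theorem isColPartition_iff {l : List (ℕ × Col)} :
    IsColPartition l ↔ (∀ p ∈ l, ValidPart p) ∧ l.IsChain Gap := by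
  refine and_congr Iff.rfl ?_
  rw [List.isChain_iff_getElem]
  refine forall_congr' fun i => ⟨fun h hi => ?_, fun h hi => ?_⟩ <;>
    simpa [Gap, getElem!_pos l i (by omega), getElem!_pos l (i + 1) hi] using h hi

theorem isColPartition_cons {p : ℕ × Col} {l : List (ℕ × Col)} :
    IsColPartition (p :: l) ↔ ValidPart p ∧ (∀ q ∈ l.head?, Gap p q) ∧ IsColPartition l := by
  simp only [isColPartition_iff, List.forall_mem_cons, List.isChain_cons]
  tauto

theorem validPart_of_mem_head? {l : List (ℕ × Col)} (hl : IsColPartition l) :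
    ∀ q ∈ l.head?, ValidPart q :=
  fun q hq => (isColPartition_iff.mp hl).1 q (List.mem_of_mem_head? hq)

theorem colPos_lt_of_gap {p q : ℕ × Col} (hq : ValidPart q) (h : Gap p q) :
    colPos q < colPos p := by
  obtain ⟨s, c⟩ := p
  obtain ⟨t, d⟩ := q
  simp only [Gap, ValidPart] at h hq
  cases c <;> cases d <;> delta colMinGap at h <;> dsimp only [colPos] at h ⊢ <;>
    (try split_ifs at h) <;> omega

theorem eq_of_colPos_eq {p q : ℕ × Col} (hp : ValidPart p) (hq : ValidPart q)
    (h : colPos p = colPos q) : p = q := by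
  obtain ⟨s, c⟩ := p
  obtain ⟨t, d⟩ := q
  simp only [ValidPart] at hp hq
  cases c <;> cases d <;> simp_all [colPos] <;> omega

theorem colPos_le_of_head_le {l : List (ℕ × Col)} (hl : IsColPartition l) {K : ℕ × Col}
    (hK : ∀ q ∈ l.head?, colPos q ≤ colPos K) : ∀ p ∈ l, colPos p ≤ colPos K := by
  induction l with
  | nil => simp
  | cons q l ih =>
    obtain ⟨-, hgap, hl⟩ := isColPartition_cons.mp hl
    have hq : colPos q ≤ colPos K := hK q rfl
    refine List.forall_mem_cons.mpr ⟨hq, ih hl fun r hr => ?_⟩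
    exact (colPos_lt_of_gap (validPart_of_mem_head? hl r hr) (hgap r hr)).le.trans hq

def weightA : Col → ℕ
  | .a | .ab => 1
  | .aa => 2
  | .b | .bb => 0

def weightB : Col → ℕ
  | .b | .ab => 1
  | .bb => 2
  | .a | .aa => 0

theorem aCt_cons (p : ℕ × Col) (l : List (ℕ × Col)) : aCt (p :: l) = weightA p.2 + aCt l := by
  cases h : p.2 <;> simp [aCt, weightA, h] <;> omega

theorem bCt_cons (p : ℕ × Col) (l : List (ℕ × Col)) : bCt (p :: l) = weightB p.2 + bCt l := by
  cases h : p.2 <;> simp [bCt, weightB, h] <;> omega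

def HasWeight (u v n : ℤ) (l : List (ℕ × Col)) : Prop :=
  ((l.map Prod.fst).sum : ℤ) = n ∧ (aCt l : ℤ) = u ∧ (bCt l : ℤ) = v

theorem hasWeight_cons {u v n : ℤ} {p : ℕ × Col} {l : List (ℕ × Col)} :
    HasWeight u v n (p :: l) ↔ HasWeight (u - weightA p.2) (v - weightB p.2) (n - p.1) l := by
  simp only [HasWeight, List.map_cons, List.sum_cons, aCt_cons, bCt_cons]
  omega

instance : Fintype Col :=
  ⟨{.a, .b, .ab, .aa, .bb}, fun c => by cases c <;> decide⟩

theorem finite_isColPartition_hasWeight (u v n : ℤ) :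
    {l | IsColPartition l ∧ HasWeight u v n l}.Finite := by
  let bounded : Set (ℕ × Col) := {p | p.1 ≤ n.toNat}
  have : Finite bounded :=
    (((Set.finite_Iic n.toNat).prod Set.finite_univ).subset fun p hp => ⟨hp, trivial⟩).to_subtype
  refine ((List.finite_length_le bounded n.toNat).image (List.map Subtype.val)).subset ?_
  rintro l ⟨hl, hsum, -⟩
  have hpos : ∀ x ∈ l.map Prod.fst, 1 ≤ x := by
    simpa using fun p hp => ((isColPartition_iff.mp hl).1 p hp).1
  have hle : ∀ p ∈ l, p.1 ≤ n.toNat := fun p hp =>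
    (List.le_sum_of_mem (List.mem_map_of_mem hp)).trans (by omega)
  refine ⟨l.pmap Subtype.mk hle, ?_, by simp [List.map_pmap]⟩
  simpa [hsum] using (List.length_le_sum_of_one_le _ hpos).trans (by omega)

/-- `l.head?` is the largest part of `l`, and `none` for the empty partition. -/
noncomputable def headCount (H : Option (ℕ × Col) → Prop) (u v n : ℤ) : ℕ :=
  Nat.card {l // IsColPartition l ∧ H l.head? ∧ HasWeight u v n l}

variable {u v n : ℤ}

theorem finite_headCount (H : Option (ℕ × Col) → Prop) :
    Finite {l // IsColPartition l ∧ H l.head? ∧ HasWeight u v n l} :=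
  ((finite_isColPartition_hasWeight u v n).subset fun _ h => ⟨h.1, h.2.2⟩).to_subtype

theorem headCount_congr {H H' : Option (ℕ × Col) → Prop}
    (h : ∀ o, (∀ q ∈ o, ValidPart q) → (H o ↔ H' o)) :
    headCount H u v n = headCount H' u v n :=
  Nat.card_congr <| Equiv.subtypeEquivRight fun _ =>
    ⟨fun ⟨hl, hH, hw⟩ => ⟨hl, (h _ (validPart_of_mem_head? hl)).mp hH, hw⟩,
      fun ⟨hl, hH, hw⟩ => ⟨hl, (h _ (validPart_of_mem_head? hl)).mpr hH, hw⟩⟩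

theorem headCount_or {H₁ H₂ : Option (ℕ × Col) → Prop} (hdisj : ∀ o, ¬(H₁ o ∧ H₂ o)) :
    headCount (fun o => H₁ o ∨ H₂ o) u v n = headCount H₁ u v n + headCount H₂ u v n := by
  classical
  have := finite_headCount (u := u) (v := v) (n := n) H₁
  have := finite_headCount (u := u) (v := v) (n := n) H₂
  rw [headCount, headCount, headCount, ← Nat.card_sum]
  refine Nat.card_congr <| (Equiv.subtypeEquivRight fun _ => ?_).trans <|
    subtypeOrEquiv _ _ (Pi.disjoint_iff.mpr fun l =>
      Prop.disjoint_iff.mpr fun h => hdisj _ ⟨h.1.2.1, h.2.2.1⟩)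
  tauto

theorem headCount_some {p : ℕ × Col} (hp : ValidPart p) :
    headCount (· = some p) u v n =
      headCount (fun o => ∀ q ∈ o, Gap p q) (u - weightA p.2) (v - weightB p.2) (n - p.1) :=
  Nat.card_congr
    { toFun := fun l => ⟨l.1.tail, by
        obtain ⟨l, hl, hH, hw⟩ := l
        obtain ⟨t, rfl⟩ := List.head?_eq_some_iff.mp hH
        obtain ⟨-, hgap, ht⟩ := isColPartition_cons.mp hl
        exact ⟨ht, hgap, hasWeight_cons.mp hw⟩⟩
      invFun := fun t => ⟨p :: t.1, isColPartition_cons.mpr ⟨hp, t.2.2.1, t.2.1⟩, rfl,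
        hasWeight_cons.mpr t.2.2.2⟩
      left_inv := fun l => Subtype.ext (List.cons_head?_tail l.2.2.1)
      right_inv := fun _ => rfl }

theorem dct_eq_headCount (K : ℕ × Col) (u v n : ℤ) :
    dct K u v n = headCount (fun o => ∀ q ∈ o, colPos q ≤ colPos K) u v n :=
  Nat.card_congr <| Equiv.subtypeEquivRight fun _ =>
    ⟨fun ⟨hl, hK, hw⟩ => ⟨hl, fun q hq => hK q (List.mem_of_mem_head? hq), hw⟩,
      fun ⟨hl, hK, hw⟩ => ⟨hl, colPos_le_of_head_le hl hK, hw⟩⟩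

theorem ect_eq_headCount (K : ℕ × Col) (u v n : ℤ) :
    ect K u v n = headCount (· = some K) u v n := by
  refine Nat.card_congr <| Equiv.subtypeEquivRight fun l => ?_
  have hhead : l ≠ [] ∧ l.head! = K ↔ l.head? = some K := by cases l <;> simp
  constructor
  · rintro ⟨hl, -, hne, hK, hw⟩
    exact ⟨hl, hhead.mp ⟨hne, hK⟩, hw⟩
  · rintro ⟨hl, hK, hw⟩
    exact ⟨hl, colPos_le_of_head_le hl (by simp [hK]), (hhead.mpr hK).1,
      (hhead.mpr hK).2, hw⟩

theorem dct_eq_dct_add_ect {K K' : ℕ × Col} (hK : ValidPart K) (h : colPos K = colPos K' + 1)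
    (u v n : ℤ) : dct K u v n = dct K' u v n + ect K u v n := by
  rw [dct_eq_headCount, dct_eq_headCount, ect_eq_headCount, ← headCount_or]
  · refine headCount_congr fun o ho => ?_
    cases o with
    | none => simp
    | some q =>
      simp only [Option.mem_def, Option.some.injEq, forall_eq']
      refine ⟨fun hq => ?_, by rintro (hq | rfl) <;> omega⟩
      by_cases hqK : colPos q = colPos K
      · exact Or.inr (eq_of_colPos_eq (ho q rfl) hK hqK)
      · exact Or.inl (by omega)
  · rintro (_ | q) ⟨hq, hqK⟩
    · simp at hqK
    · simp only [Option.some.injEq] at hqK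
      subst hqK
      simp at hq
      omega

theorem ect_eq_headCount_gap {p : ℕ × Col} (hp : ValidPart p) (u v n : ℤ) :
    ect p u v n =
      headCount (fun o => ∀ q ∈ o, Gap p q) (u - weightA p.2) (v - weightB p.2) (n - p.1) := by
  rw [ect_eq_headCount, headCount_some hp]

theorem ect_eq_ect_of_gap_iff {p p' : ℕ × Col} (hp : ValidPart p) (hp' : ValidPart p')
    (hgap : ∀ q, ValidPart q → (Gap p q ↔ Gap p' q)) {u' v' n' : ℤ}
    (hu : u - weightA p.2 = u' - weightA p'.2) (hv : v - weightB p.2 = v' - weightB p'.2)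
    (hn : n - p.1 = n' - p'.1) : ect p u v n = ect p' u' v' n' := by
  rw [ect_eq_headCount_gap hp, ect_eq_headCount_gap hp', hu, hv, hn]
  exact headCount_congr fun o ho => forall₂_congr fun q hq => hgap q (ho q hq)

theorem dct_eq_zero_of_neg (K : ℕ × Col) (u v n : ℤ) (h : u < 0 ∨ n < 0) :
    dct K u v n = 0 := by
  rw [dct_eq_headCount, headCount, Nat.card_eq_zero]
  exact Or.inl ⟨fun ⟨_, _, _, hn, hu, _⟩ => by omega⟩

theorem gap_a_iff_gap_aa {m : ℕ} (hm : m % 2 = 0) (q : ℕ × Col) :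
    Gap (m, Col.a) q ↔ Gap (m + 1, Col.aa) q := by
  obtain ⟨t, d⟩ := q
  cases d <;> simp only [Gap] <;> delta colMinGap <;> dsimp only <;> split_ifs <;> omega

theorem gap_b_iff_gap_ab {m : ℕ} (hm : m % 2 = 0) {q : ℕ × Col} (hq : ValidPart q) :
    Gap (m, Col.b) q ↔ Gap (m + 1, Col.ab) q := by
  obtain ⟨t, d⟩ := q
  simp only [ValidPart] at hq
  cases d <;> simp only [Gap] <;> delta colMinGap <;> dsimp only <;> split_ifs <;> simp_all <;>
    omega

theorem gap_even_a_iff {k : ℕ} (hk : 1 ≤ k) {q : ℕ × Col} (hq : ValidPart q) :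
    Gap (2 * k + 2, Col.a) q ↔ colPos q ≤ colPos (2 * k, Col.a) ∨ q = (2 * k, Col.b) := by
  obtain ⟨t, d⟩ := q
  simp only [ValidPart] at hq
  cases d <;> simp only [Gap, colPos] <;> delta colMinGap <;> dsimp only <;> split_ifs <;>
    simp_all <;> omega

variable {k : ℕ}

theorem ect_even_a_eq (hk : 1 ≤ k) (u v n : ℤ) :
    ect (2 * k + 2, Col.a) u v n =
      dct (2 * k, Col.a) (u - 1) v (n - (2 * k + 2)) +
        ect (2 * k, Col.b) (u - 1) v (n - (2 * k + 2)) := by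
  rw [ect_eq_headCount_gap (by simp [ValidPart]), dct_eq_headCount, ect_eq_headCount,
    ← headCount_or]
  · push_cast [weightA, weightB, sub_zero]
    refine headCount_congr fun o ho => ?_
    cases o with
    | none => simp
    | some q => simpa using gap_even_a_iff hk (ho q rfl)
  · rintro (_ | q) ⟨hq, hqb⟩
    · simp at hqb
    · simp only [Option.some.injEq] at hqb
      subst hqb
      simp [colPos] at hq
      omega

theorem dct_recurrence (hk : 1 ≤ k) (u v n : ℤ) :
    dct (2 * k + 3, Col.aa) u v n =
      dct (2 * k + 2, Col.ab) u v n + dct (2 * k + 1, Col.ab) (u - 1) v (n - (2 * k + 2)) +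
        dct (2 * k, Col.ab) (u - 2) v (n - (2 * k + 3)) := by
  have v3aa : ValidPart (2 * k + 3, Col.aa) := by simp [ValidPart]
  have v2a : ValidPart (2 * k + 2, Col.a) := by simp [ValidPart]
  have v0a : ValidPart (2 * k, Col.a) := by simp [ValidPart]; omega
  have v0b : ValidPart (2 * k, Col.b) := by simp [ValidPart]; omega
  have v1aa : ValidPart (2 * k + 1, Col.aa) := by simp [ValidPart]
  have v1ab : ValidPart (2 * k + 1, Col.ab) := by simp [ValidPart]; omega
  have split_3aa := dct_eq_dct_add_ect v3aa (K' := (2 * k + 2, Col.a)) (by simp [colPos]; omega)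
  have split_2a := dct_eq_dct_add_ect v2a (K' := (2 * k + 2, Col.ab)) (by simp [colPos]; omega)
  have split_1ab := dct_eq_dct_add_ect v1ab (K' := (2 * k, Col.b)) (by simp [colPos]; omega)
  have split_0b := dct_eq_dct_add_ect v0b (K' := (2 * k + 1, Col.aa)) (by simp [colPos]; omega)
  have split_1aa := dct_eq_dct_add_ect v1aa (K' := (2 * k, Col.a)) (by simp [colPos]; omega)
  have split_0a := dct_eq_dct_add_ect v0a (K' := (2 * k, Col.ab)) (by simp [colPos]; omega)
  have ect_3aa : ect (2 * k + 3, Col.aa) u v n = ect (2 * k + 2, Col.a) (u - 1) v (n - 1) :=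
    ect_eq_ect_of_gap_iff v3aa v2a (fun q _ => (gap_a_iff_gap_aa (by omega) q).symm)
      (by simp [weightA]; ring) rfl (by push_cast; ring)
  have ect_0a : ect (2 * k, Col.a) (u - 2) v (n - (2 * k + 3)) =
      ect (2 * k + 1, Col.aa) (u - 1) v (n - (2 * k + 2)) :=
    ect_eq_ect_of_gap_iff v0a v1aa (fun q _ => gap_a_iff_gap_aa (by omega) q)
      (by simp [weightA]; ring) rfl (by push_cast; ring)
  have ect_0b : ect (2 * k, Col.b) (u - 2) v (n - (2 * k + 3)) =
      ect (2 * k + 1, Col.ab) (u - 1) v (n - (2 * k + 2)) :=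
    ect_eq_ect_of_gap_iff v0b v1ab (fun q hq => gap_b_iff_gap_ab (by omega) hq)
      (by simp [weightA]; ring) (by simp [weightB]) (by push_cast; ring)
  rw [split_3aa, split_2a, ect_3aa, ect_even_a_eq hk, ect_even_a_eq hk,
    show u - 1 - 1 = u - 2 by ring, show n - 1 - (2 * k + 2) = n - (2 * k + 3) by ring,
    split_0a (u - 2), ect_0a, ect_0b, split_1ab, split_0b, split_1aa, split_0a]
  ring

noncomputable def countSeries (f : ℤ → ℤ → ℤ → ℕ) : MvPowerSeries (Fin 3) ℚ :=
  fun e => (f (e 0) (e 1) (e 2) : ℚ)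

open MvPowerSeries

theorem countSeries_add (f g : ℤ → ℤ → ℤ → ℕ) :
    countSeries (fun u v n => f u v n + g u v n) = countSeries f + countSeries g := by
  funext e
  exact Nat.cast_add _ _

theorem coeff_countSeries (f : ℤ → ℤ → ℤ → ℕ) (e : Fin 3 →₀ ℕ) :
    coeff e (countSeries f) = f (e 0) (e 1) (e 2) := rfl

theorem X_pow_mul_countSeries {f : ℤ → ℤ → ℤ → ℕ} (hf : ∀ u v n, u < 0 ∨ n < 0 → f u v n = 0)
    (i j : ℕ) :
    X 0 ^ i * X 2 ^ j * countSeries f = countSeries fun u v n => f (u - i) v (n - j) := by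
  ext e
  rw [X_pow_eq, X_pow_eq, monomial_mul_monomial, one_mul, coeff_monomial_mul]
  split_ifs with hle
  · have h0 := hle 0
    have h2 := hle 2
    simp at h0 h2
    simp [coeff_countSeries, Finsupp.tsub_apply, Nat.cast_sub h0, Nat.cast_sub h2]
  · have : (e 0 : ℤ) - i < 0 ∨ (e 2 : ℤ) - j < 0 := by
      by_contra! h
      exact hle fun x => by fin_cases x <;> simp <;> omega
    rw [coeff_countSeries, hf _ _ _ this, Nat.cast_zero]

end ColPartition

open MvPowerSeries in
/-- The key recurrence (4.5) for G_{(2k+3)_{a²}}, together with its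
counting form. -/
theorem key_recurrence_aa (k : ℕ) (hk : 1 ≤ k) :
    (∀ (u v n : ℕ), 1 ≤ n →
      dct (2*k+3, Col.aa) u v n =
        dct (2*k+2, Col.ab) u v n +
        dct (2*k+1, Col.ab) ((u : ℤ) - 1) (v : ℤ) ((n : ℤ) - (2*k+2)) +
        dct (2*k, Col.ab) ((u : ℤ) - 2) (v : ℤ) ((n : ℤ) - (2*k+3))) ∧
    Gf (2*k+3, Col.aa) =
      Gf (2*k+2, Col.ab) +
      (X 0 * X 2 ^ (2*k+2) : MvPowerSeries (Fin 3) ℚ) * Gf (2*k+1, Col.ab) +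
      (X 0 ^ 2 * X 2 ^ (2*k+3) : MvPowerSeries (Fin 3) ℚ) * Gf (2*k, Col.ab) := by
  open ColPartition in
  refine ⟨fun u v n _ => dct_recurrence hk u v n, ?_⟩
  have hGf (K : ℕ × Col) : Gf K = countSeries (dct K) := rfl
  nth_rw 1 [← pow_one (X 0 : MvPowerSeries (Fin 3) ℚ)]
  rw [hGf, hGf, hGf, hGf, X_pow_mul_countSeries (dct_eq_zero_of_neg _),
    X_pow_mul_countSeries (dct_eq_zero_of_neg _), ← countSeries_add, ← countSeries_add]
  congr 1
  funext u v n
  push_cast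
  exact dct_recurrence hk u v n
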